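/- The toric Schur polynomial s_{λ/d/μ}(x_1,...,x_k) is nonzero if and only if the cylindric shape λ/d/μ is a toric shape. -/

import Mathlib

open Finset

/-- The set `P_{kn}` of partitions fitting in a `k × (n-k)` rectangle,
represented as antitone functions `Fin k → ℕ` bounded by `n - k`. -/
def PknFinset (k n : ℕ) : Finset (Fin k → ℕ) :=
  ((Finset.univ : Finset (Fin k → Fin (n - k + 1))).image (fun f i => (f i : ℕ))).filter
    (fun lam => ∀ i j : Fin k, i ≤ j → lam j ≤ lam i)

/-- The 01-word of a partition `λ ∈ P_{kn}`: position `j` (0-based; 1-based `j+1`)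
carries a `1` iff `j + 1 = λ_i + (k + 1 - i)` for some row `i`. -/
def omegaWord (n : ℕ) {k : ℕ} (lam : Fin k → ℕ) : Fin n → Bool :=
  fun j => decide (∃ i : Fin k, lam i + (k - (i : ℕ)) = (j : ℕ) + 1)

/-- The complement partition `λ∨`, with `λ∨_i = n - k - λ_{k+1-i}`. -/
def complP (n k : ℕ) (lam : Fin k → ℕ) : Fin k → ℕ :=
  fun i => (n - k) - lam (Fin.rev i)

/-- Size of the Durfee square of `λ` (number of boxes on the main diagonal). -/
def diag0 {k : ℕ} (lam : Fin k → ℕ) : ℕ :=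
  (Finset.univ.filter (fun i : Fin k => (i : ℕ) < lam i)).card

/-- Number of boxes of `λ` on the `i`-th diagonal. -/
def diagI {k : ℕ} (lam : Fin k → ℕ) (i : ℤ) : ℕ :=
  (Finset.univ.filter (fun a : Fin k => 0 ≤ (a : ℤ) + i ∧ (a : ℤ) + 1 + i ≤ (lam a : ℤ))).card

/-- `|λ| = λ_1 + ⋯ + λ_k`. -/
def psize {k : ℕ} (lam : Fin k → ℕ) : ℕ := ∑ i, lam i

/-- The value at index `t` of the cylindric loop `λ[r]`: the `(k,n)`-periodic
weakly decreasing sequence with `λ[r]_{i+r} = λ_i + r` for `1 ≤ i ≤ k`. -/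
def loopVal (n : ℕ) {k : ℕ} (lam : Fin k → ℕ) (r t : ℤ) : ℤ :=
  if h : 0 < k then
    (lam ⟨((t - r - 1) % (k : ℤ)).toNat, by
      have hk0 : ((k : ℤ)) ≠ 0 := by exact_mod_cast h.ne'
      have h1 : 0 ≤ (t - r - 1) % (k : ℤ) := Int.emod_nonneg _ hk0
      have h2 : (t - r - 1) % (k : ℤ) < (k : ℤ) := Int.emod_lt_of_pos _ (by exact_mod_cast h)
      omega⟩ : ℤ) + r - ((t - r - 1) / (k : ℤ)) * ((n : ℤ) - (k : ℤ))
  else 0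

/-- The cylindric diagram of shape `λ[r]/μ[s]`, as a `Shift`-invariant subset of `ℤ²`
(whose quotient modulo `(-k, n-k)ℤ` is the diagram in the cylinder). -/
def cylDiagram (n : ℕ) {k : ℕ} (lam mu : Fin k → ℕ) (r s : ℤ) : Set (ℤ × ℤ) :=
  {p | loopVal n mu s p.1 < p.2 ∧ p.2 ≤ loopVal n lam r p.1}

/-- The cylindric shape `λ[r]/μ[s]` is toric: the projection of its diagram from the
cylinder `ℤ²/(-k, n-k)ℤ` to the torus `(ℤ/k) × (ℤ/(n-k))` is injective. -/
def IsToricShape (n : ℕ) {k : ℕ} (lam mu : Fin k → ℕ) (r s : ℤ) : Prop :=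
  ∀ p q : ℤ × ℤ, p ∈ cylDiagram n lam mu r s → q ∈ cylDiagram n lam mu r s →
    (k : ℤ) ∣ (q.1 - p.1) → ((n : ℤ) - k) ∣ (q.2 - p.2) →
    ∃ m : ℤ, q.1 = p.1 - m * k ∧ q.2 = p.2 + m * ((n : ℤ) - k)

/-- A semi-standard cylindric tableau of shape `λ/d/μ = λ[d]/μ[0]`, encoded as a
`Shift`-periodic function on `ℤ²` that is positive exactly on the diagram, weakly
increasing along rows and strictly increasing along columns. -/
def IsCylTableau (n : ℕ) {k : ℕ} (lam mu : Fin k → ℕ) (d : ℕ) (T : ℤ × ℤ → ℕ) : Prop :=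
  (∀ p : ℤ × ℤ, p ∈ cylDiagram n lam mu (d : ℤ) 0 ↔ 0 < T p) ∧
  (∀ p : ℤ × ℤ, T (p.1 - (k : ℤ), p.2 + ((n : ℤ) - k)) = T p) ∧
  (∀ p : ℤ × ℤ, p ∈ cylDiagram n lam mu (d : ℤ) 0 →
      (p.1, p.2 + 1) ∈ cylDiagram n lam mu (d : ℤ) 0 → T p ≤ T (p.1, p.2 + 1)) ∧
  (∀ p : ℤ × ℤ, p ∈ cylDiagram n lam mu (d : ℤ) 0 →
      (p.1 + 1, p.2) ∈ cylDiagram n lam mu (d : ℤ) 0 → T p < T (p.1 + 1, p.2))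

/-- The number of entries of the cylindric tableau `T` equal to `c`, counted once per
`Shift`-orbit (rows `1,…,k` form a fundamental domain). -/
noncomputable def cylWeight (k : ℕ) (T : ℤ × ℤ → ℕ) (c : ℕ) : ℕ :=
  {p : ℤ × ℤ | 1 ≤ p.1 ∧ p.1 ≤ (k : ℤ) ∧ T p = c}.ncard

/-- Number of semi-standard cylindric tableaux of shape `λ/d/μ` with weight `β`
(entries taken among `1, …, l`). -/
noncomputable def tabCount (n : ℕ) {k : ℕ} (lam mu : Fin k → ℕ) (d : ℕ) {l : ℕ} (beta : Fin l → ℕ) : ℕ :=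
  {T : ℤ × ℤ → ℕ | IsCylTableau n lam mu d T ∧
    (∀ i : Fin l, cylWeight k T ((i : ℕ) + 1) = beta i) ∧
    (∀ c : ℕ, l < c → cylWeight k T c = 0)}.ncard

/-- The elementary symmetric generator `e_t` of `ℤ[q, e_1, …, e_k]` (zero out of range,
`1` for `t = 0`).  The variable `none` is the quantum parameter `q`. -/
noncomputable def epolyZ (k : ℕ) (t : ℤ) : MvPolynomial (Option (Fin k)) ℤ :=
  if t = 0 then 1
  else if h : 0 < t ∧ t ≤ (k : ℤ) then MvPolynomial.X (some ⟨(t - 1).toNat, by omega⟩) else 0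

/-- The complete homogeneous symmetric function `h_m`, expressed in the `e_i`
via the dual Jacobi–Trudi determinant. -/
noncomputable def hpolyD (k m : ℕ) : MvPolynomial (Option (Fin k)) ℤ :=
  Matrix.det (Matrix.of (fun i j : Fin m => epolyZ k (1 + (j : ℤ) - (i : ℤ))))

/-- `h_t` with the convention `h_t = 0` for `t < 0`. -/
noncomputable def hpolyDZ (k : ℕ) (t : ℤ) : MvPolynomial (Option (Fin k)) ℤ :=
  if 0 ≤ t then hpolyD k t.toNat else 0

/-- The ideal `I_q = ⟨h_{n-k+1}, …, h_{n-1}, h_n + (-1)^k q⟩` of `ℤ[q, e_1, …, e_k]`. -/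
noncomputable def qIdeal (k n : ℕ) : Ideal (MvPolynomial (Option (Fin k)) ℤ) :=
  Ideal.span ((hpolyD k '' (Set.Ioo (n - k) n)) ∪
    {hpolyD k n + ((-1) ^ k : ℤ) • MvPolynomial.X none})

/-- The quantum cohomology ring `QH*(Gr_{k,n}) = ℤ[q, e_1, …, e_k]/I_q`. -/
abbrev QHRing (k n : ℕ) := MvPolynomial (Option (Fin k)) ℤ ⧸ qIdeal k n

/-- The class of the quantum parameter `q` in `QH*(Gr_{k,n})`. -/
noncomputable def qClass (k n : ℕ) : QHRing k n := Ideal.Quotient.mk _ (MvPolynomial.X none)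

/-- The Schubert class `σ_λ ∈ QH*(Gr_{k,n})`, defined by the (quantum) Giambelli
formula `σ_λ = det(h_{λ_i + j - i})`. -/
noncomputable def sigmaClass (k n : ℕ) (lam : Fin k → ℕ) : QHRing k n :=
  Ideal.Quotient.mk _
    (Matrix.det (Matrix.of (fun i j : Fin k => hpolyDZ k ((lam i : ℤ) + (j : ℤ) - (i : ℤ)))))

/-- The special class `h_j = σ_{(j)}`. -/
noncomputable def hClass (k n : ℕ) (j : ℕ) : QHRing k n := Ideal.Quotient.mk _ (hpolyD k j)

/-- The special class `e_j = σ_{(1^j)}`. -/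
noncomputable def eClass (k n : ℕ) (j : ℕ) : QHRing k n := Ideal.Quotient.mk _ (epolyZ k (j : ℤ))

/-- The statement that `gw` is the family of structure constants (Gromov–Witten
invariants) of `QH*(Gr_{k,n})`:
`σ_μ * σ_ν = ∑_{d,λ} q^d C_{μν}^{λ,d} σ_λ` (all structure constants vanish
beyond degree `2k(n-k)`, which bounds the possible degrees). -/
def IsGWFamily (k n : ℕ)
    (gw : (Fin k → ℕ) → (Fin k → ℕ) → (Fin k → ℕ) → ℕ → ℤ) : Prop :=
  ∀ mu nu : Fin k → ℕ, mu ∈ PknFinset k n → nu ∈ PknFinset k n →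
    (sigmaClass k n mu * sigmaClass k n nu =
      ∑ e ∈ Finset.range (2 * k * (n - k) + 1), ∑ lm ∈ PknFinset k n,
        gw mu nu lm e • (qClass k n ^ e * sigmaClass k n lm)) ∧
    (∀ e lm, 2 * k * (n - k) < e → gw mu nu lm e = 0)

/-- Recover a partition in `P_{kn}` from a 01-word with `k` ones. -/
def partOfWord (k n : ℕ) (w : Fin n → Bool) : Fin k → ℕ :=
  fun i =>
    if h : (Finset.univ.filter (fun j : Fin n => w j = true)).card = k then
      ((Finset.orderIsoOfFin _ h (Fin.rev i) : Fin n) : ℕ) + 1 - (k - (i : ℕ))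
    else 0

/-- Cyclic rotation of a 01-word: `(rotWord a w)_j = w_{j+a mod n}`. -/
def rotWord (n : ℕ) (a : ℤ) (w : Fin n → Bool) : Fin n → Bool :=
  fun j =>
    if h : 0 < n then
      w ⟨(((j : ℤ) + a) % (n : ℤ)).toNat, by
        have hn0 : ((n : ℤ)) ≠ 0 := by exact_mod_cast h.ne'
        have h1 : 0 ≤ ((j : ℤ) + a) % (n : ℤ) := Int.emod_nonneg _ hn0
        have h2 : ((j : ℤ) + a) % (n : ℤ) < (n : ℤ) := Int.emod_lt_of_pos _ (by exact_mod_cast h)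
        omega⟩
    else false
  
/-- The `a`-th power of the cyclic shift `S` on `P_{kn}`:
`S^a(λ)` is the partition whose 01-word is `ω(λ)` rotated by `a`. -/
def Srot (k n : ℕ) (a : ℤ) (lam : Fin k → ℕ) : Fin k → ℕ :=
  partOfWord k n (rotWord n a (omegaWord n lam))

/-- `φ_i(λ)`: for `1 ≤ i ≤ n` the partial sum `ω_1 + ⋯ + ω_i` of the 01-word of `λ`,
extended to all `i ∈ ℤ` by `φ_{i+n} = φ_i + k`. -/
def phi (n : ℕ) {k : ℕ} (lam : Fin k → ℕ) (i : ℤ) : ℤ :=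
  ((Finset.univ.filter
      (fun j : Fin n => ((j : ℕ) : ℤ) < i % (n : ℤ) ∧ omegaWord n lam j = true)).card : ℤ)
    + (k : ℤ) * (i / (n : ℤ))

/-- `C_{λμν}(q) = ∑_e CCoef(λ,μ,ν,e) q^e`: the coefficient of `q^e` in the
Gromov–Witten generating function `q^d C^d_{λμν}` (zero unless `e` equals the
degree `d = (|λ|+|μ|+|ν|-k(n-k))/n`), where `C^d_{λμν} = C_{λμ}^{ν∨,d}`. -/
def CCoef (k n : ℕ) (gw : (Fin k → ℕ) → (Fin k → ℕ) → (Fin k → ℕ) → ℕ → ℤ)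
    (lam mu nu : Fin k → ℕ) (e : ℕ) : ℤ :=
  if ((psize lam : ℤ) + psize mu + psize nu) = (k : ℤ) * ((n : ℤ) - k) + (e : ℤ) * n then
    gw lam mu (complP n k nu) e
  else 0

/-! The diagram of `λ/d/μ` is the region between two weakly decreasing boundaries `loopVal`,
both of which move `n - k` columns left when one goes `k` rows down. Its columns are therefore
intervals, and a tableau with entries in `{1, …, k}` exists iff no column has more than `k` boxes:
strictly increasing columns force this, and conversely numbering every box by its position in
its column gives such a tableau. Toricity is the same condition: two boxes `k` rows apart in a
column are identified on the torus; conversely, short columns make rows have at most `n - k`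
boxes, so two boxes of one row that agree on the torus already agree on the cylinder. -/

section ToricShape

variable {k n : ℕ}

lemma loopVal_apply (lam : Fin k → ℕ) (r : ℤ) (i : Fin k) (q : ℤ) :
    loopVal n lam r (r + 1 + i + q * k) = lam i + r - q * ((n : ℤ) - k) := by
  have hi0 : (0 : ℤ) ≤ i := by positivity
  have hik : (i : ℤ) < k := by exact_mod_cast i.isLt
  have hmod : ((i : ℤ) + q * k) % k = i := by
    rw [Int.add_mul_emod_self_right, Int.emod_eq_of_lt hi0 hik]
  have hdiv : ((i : ℤ) + q * k) / k = q := by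
    rw [Int.add_mul_ediv_right _ _ (by omega), Int.ediv_eq_zero_of_lt hi0 hik, zero_add]
  simp only [loopVal, dif_pos i.pos, show r + 1 + i + q * k - r - 1 = i + q * k by ring, hmod,
    hdiv, Int.toNat_natCast, Fin.eta]

lemma exists_loopVal_index (hk : 0 < k) (r t : ℤ) :
    ∃ (i : Fin k) (q : ℤ), t = r + 1 + i + q * k := by
  have hk' : (0 : ℤ) < k := by exact_mod_cast hk
  have hlt := Int.emod_lt_of_pos (t - r - 1) hk'
  have hnonneg := Int.emod_nonneg (t - r - 1) hk'.ne'
  have hdecomp := Int.mul_ediv_add_emod (t - r - 1) k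
  refine ⟨⟨((t - r - 1) % k).toNat, by omega⟩, (t - r - 1) / k, ?_⟩
  simp only [Int.toNat_of_nonneg hnonneg]
  linarith

lemma loopVal_add_mul (hk : 0 < k) (lam : Fin k → ℕ) (r t m : ℤ) :
    loopVal n lam r (t + m * k) = loopVal n lam r t - m * ((n : ℤ) - k) := by
  obtain ⟨i, q, rfl⟩ := exists_loopVal_index hk r t
  rw [show r + 1 + i + q * k + m * k = r + 1 + i + (q + m) * k by ring, loopVal_apply,
    loopVal_apply]
  ring

lemma loopVal_succ_le (lam : Fin k → ℕ) (hlam : Antitone lam)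
    (hbd : ∀ i, (lam i : ℤ) ≤ n - k) (r t : ℤ) :
    loopVal n lam r (t + 1) ≤ loopVal n lam r t := by
  rcases Nat.eq_zero_or_pos k with rfl | hk
  · simp [loopVal]
  obtain ⟨i, q, rfl⟩ := exists_loopVal_index hk r t
  rw [loopVal_apply]
  by_cases hi : (i : ℕ) + 1 < k
  · have hle : lam ⟨i + 1, hi⟩ ≤ lam i := hlam (Fin.le_def.2 (Nat.le_succ _))
    rw [show r + 1 + i + q * k + 1 = r + 1 + ((⟨i + 1, hi⟩ : Fin k) : ℕ) + q * k by
      push_cast; ring, loopVal_apply]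
    omega
  · have hwrap : (i : ℤ) + 1 = k := by omega
    rw [show r + 1 + i + q * k + 1 = r + 1 + ((⟨0, hk⟩ : Fin k) : ℕ) + (q + 1) * k by
      push_cast; linear_combination hwrap, loopVal_apply]
    linarith [hbd ⟨0, hk⟩, (lam i).cast_nonneg (α := ℤ)]

lemma loopVal_antitone (lam : Fin k → ℕ) (hlam : Antitone lam)
    (hbd : ∀ i, (lam i : ℤ) ≤ n - k) (r : ℤ) : Antitone (loopVal n lam r) :=
  antitone_int_of_succ_le (loopVal_succ_le lam hlam hbd r)

lemma loopVal_antitone_of_mem_PknFinset (hkn : k ≤ n) {lam : Fin k → ℕ}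
    (h : lam ∈ PknFinset k n) (r : ℤ) : Antitone (loopVal n lam r) := by
  obtain ⟨⟨f, -, rfl⟩, hanti⟩ := And.imp_left mem_image.1 (mem_filter.1 h)
  refine loopVal_antitone _ (fun i j hij => hanti i j hij) (fun i => ?_) r
  have := (f i).isLt
  omega

lemma mem_cylDiagram {lam mu : Fin k → ℕ} {r s x y : ℤ} :
    (x, y) ∈ cylDiagram n lam mu r s ↔ loopVal n mu s x < y ∧ y ≤ loopVal n lam r x :=
  Iff.rfl

lemma mem_cylDiagram_shift (hk : 0 < k) (lam mu : Fin k → ℕ) (r s m x y : ℤ) :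
    (x + m * k, y - m * ((n : ℤ) - k)) ∈ cylDiagram n lam mu r s ↔
      (x, y) ∈ cylDiagram n lam mu r s := by
  simp only [mem_cylDiagram, loopVal_add_mul hk]
  constructor <;> rintro ⟨h1, h2⟩ <;> constructor <;> linarith

/-- Columns of a cylindric diagram are intervals, so this says that each of them has at most
`h` boxes. -/
def ColumnsAtMost (h : ℤ) (D : Set (ℤ × ℤ)) : Prop :=
  ∀ x y : ℤ, (x, y) ∈ D → (x + h, y) ∉ D

lemma columnsAtMost_of_isToricShape (hk : 0 < k) (hkn : k < n) {lam mu : Fin k → ℕ} {r s : ℤ}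
    (h : IsToricShape n lam mu r s) : ColumnsAtMost k (cylDiagram n lam mu r s) := by
  intro x y hp hq
  obtain ⟨m, hx, hy⟩ := h (x, y) (x + k, y) hp hq ⟨1, by ring⟩ ⟨0, by ring⟩
  have hm : m = -1 :=
    mul_right_cancel₀ (by exact_mod_cast hk.ne' : (k : ℤ) ≠ 0) (by linear_combination hx)
  subst hm
  omega

lemma loopVal_le_of_columnsAtMost (hk : 0 < k) (hkn : k ≤ n) {lam mu : Fin k → ℕ} {r s : ℤ}
    (h : ColumnsAtMost k (cylDiagram n lam mu r s)) (x : ℤ) :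
    loopVal n lam r x ≤ loopVal n mu s x + ((n : ℤ) - k) := by
  by_contra! hx
  have hlo := loopVal_add_mul (n := n) hk mu s x 1
  have hup := loopVal_add_mul (n := n) hk lam r x 1
  rw [one_mul, one_mul] at hlo hup
  exact h x (loopVal n mu s x + 1) (mem_cylDiagram.2 ⟨by omega, by omega⟩)
    (mem_cylDiagram.2 ⟨by omega, by omega⟩)

lemma isToricShape_of_loopVal_le (hk : 0 < k) {lam mu : Fin k → ℕ} {r s : ℤ}
    (h : ∀ x, loopVal n lam r x ≤ loopVal n mu s x + ((n : ℤ) - k)) :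
    IsToricShape n lam mu r s := by
  rintro ⟨x, y⟩ ⟨x', y'⟩ hp hq ⟨a, hx⟩ ⟨b, hy⟩
  dsimp only at hx hy ⊢
  have hq' := (mem_cylDiagram_shift hk lam mu r s (-a) x' y').2 hq
  rw [show x' + -a * k = x by linear_combination hx] at hq'
  -- boxes of row `x` lie within `n - k` of each other, so they agree modulo `n - k` only if equal
  have hsame : y' - -a * ((n : ℤ) - k) - y = 0 := by
    refine Int.eq_zero_of_abs_lt_dvd (m := (n : ℤ) - k) ⟨a + b, by linear_combination hy⟩
      (abs_lt.2 ⟨?_, ?_⟩) <;>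
      linarith [mem_cylDiagram.1 hp, mem_cylDiagram.1 hq', h x]
  exact ⟨-a, by linear_combination hx, by linear_combination hsame⟩

lemma exists_isLeast_loopVal_lt (hk : 0 < k) (hkn : k < n) {mu : Fin k → ℕ} {s : ℤ}
    (hmu : Antitone (loopVal n mu s)) (y : ℤ) :
    ∃ b, IsLeast {x | loopVal n mu s x < y} b := by
  have hN : (1 : ℤ) ≤ n - k := by omega
  refine (Int.exists_least_of_bdd (P := fun x => loopVal n mu s x < y) ?_ ?_).imp
    fun b hb => ⟨hb.1, fun z hz => hb.2 z hz⟩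
  · set M := max (y - loopVal n mu s 0) 0
    refine ⟨-M * k, fun z hz => ?_⟩
    by_contra! hlt
    have hshift := loopVal_add_mul (n := n) hk mu s 0 (-M)
    rw [zero_add] at hshift
    nlinarith [hmu hlt.le, le_max_left (y - loopVal n mu s 0) 0,
      le_max_right (y - loopVal n mu s 0) 0]
  · set M := max (loopVal n mu s 0 - y + 1) 0
    refine ⟨M * k, ?_⟩
    have hshift := loopVal_add_mul (n := n) hk mu s 0 M
    rw [zero_add] at hshift
    nlinarith [le_max_left (loopVal n mu s 0 - y + 1) 0,
      le_max_right (loopVal n mu s 0 - y + 1) 0]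

lemma eq_sub_of_isLeast_loopVal_lt (hk : 0 < k) {mu : Fin k → ℕ} {s : ℤ} {b : ℤ → ℤ}
    (hb : ∀ y, IsLeast {x | loopVal n mu s x < y} (b y)) (y : ℤ) :
    b (y + ((n : ℤ) - k)) = b y - k := by
  have h1 := loopVal_add_mul (n := n) hk mu s (b y) (-1)
  have h2 := loopVal_add_mul (n := n) hk mu s (b (y + ((n : ℤ) - k))) 1
  have hlt : ∀ y, loopVal n mu s (b y) < y := fun y => (hb y).1
  have hle := (hb (y + ((n : ℤ) - k))).2 (show loopVal n mu s (b y + -1 * k) < _ by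
    linarith [hlt y])
  have hge := (hb y).2 (show loopVal n mu s (b (y + ((n : ℤ) - k)) + 1 * k) < y by
    linarith [hlt (y + ((n : ℤ) - k))])
  linarith

lemma columnsAtMost_of_isCylTableau {lam mu : Fin k → ℕ} {d : ℕ}
    (hlam : Antitone (loopVal n lam d)) (hmu : Antitone (loopVal n mu 0)) {T : ℤ × ℤ → ℕ}
    (hT : IsCylTableau n lam mu d T) (hTk : ∀ p, T p ≤ k) :
    ColumnsAtMost k (cylDiagram n lam mu d 0) := by
  intro x y hp hq
  have hmem : ∀ j : ℕ, j ≤ k → (x + j, y) ∈ cylDiagram n lam mu d 0 := fun j hj =>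
    ⟨(hmu (by omega)).trans_lt hp.1, hq.2.trans (hlam (by omega))⟩
  have hchain : ∀ j : ℕ, j ≤ k → T (x, y) + j ≤ T (x + j, y) := by
    intro j hj
    induction j with
    | zero => simp
    | succ j ih =>
      have hstep : T (x + j, y) < T (x + j + 1, y) := hT.2.2.2 (x + j, y) (hmem j (by omega))
        (by simpa [add_assoc] using hmem (j + 1) hj)
      push_cast
      rw [← add_assoc x]
      omega
  have := hchain k le_rfl
  have := (hT.1 (x, y)).1 hp
  have := hTk (x + k, y)
  omega

lemma exists_isCylTableau_of_columnsAtMost (hk : 0 < k) (hkn : k < n) {lam mu : Fin k → ℕ}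
    {d : ℕ} (hlam : Antitone (loopVal n lam d)) (hmu : Antitone (loopVal n mu 0))
    (h : ColumnsAtMost k (cylDiagram n lam mu d 0)) :
    ∃ T : ℤ × ℤ → ℕ, IsCylTableau n lam mu d T ∧ ∀ p, T p ≤ k := by
  classical
  -- `b y` is the top row of column `y`
  choose b hb using exists_isLeast_loopVal_lt hk hkn hmu
  have hb_lt : ∀ y, loopVal n mu 0 (b y) < y := fun y => (hb y).1
  have hb_min : ∀ y z, loopVal n mu 0 z < y → b y ≤ z := fun y _ hz => (hb y).2 hz
  have hb_shift := eq_sub_of_isLeast_loopVal_lt hk hb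
  refine ⟨fun p => if p ∈ cylDiagram n lam mu d 0 then (p.1 - b p.2 + 1).toNat else 0,
    ⟨fun p => ?_, fun p => ?_, fun p hp hp' => ?_, fun p hp hp' => ?_⟩, fun p => ?_⟩
  · by_cases hp : p ∈ cylDiagram n lam mu d 0
    · have := hb_min p.2 p.1 hp.1
      simp only [hp, if_true, true_iff]
      omega
    · simp [hp]
  · have hmem := mem_cylDiagram_shift (n := n) hk lam mu d 0 (-1) p.1 p.2
    simp only [neg_mul, one_mul, ← sub_eq_add_neg, sub_neg_eq_add] at hmem
    simp only [hmem, hb_shift]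
    split_ifs <;> omega
  · have := hb_min p.2 p.1 hp.1
    have := hb_min (p.2 + 1) (b p.2) (by linarith [hb_lt p.2])
    simp only [hp, hp', if_true]
    omega
  · have := hb_min p.2 p.1 hp.1
    simp only [hp, hp', if_true]
    omega
  · dsimp only
    split_ifs with hp
    · by_contra! hbig
      have hlo : loopVal n mu 0 (p.1 - k) < p.2 := (hmu (by omega)).trans_lt (hb_lt p.2)
      have hup : p.2 ≤ loopVal n lam d (p.1 - k) := hp.2.trans (hlam (by omega))
      exact h (p.1 - k) p.2 ⟨hlo, hup⟩ (by simpa using hp)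
    · omega

end ToricShape

/-- The toric Schur polynomial `s_{λ/d/μ}(x_1,…,x_k)` is nonzero (i.e. there exists a
semi-standard cylindric tableau of shape `λ/d/μ` with entries at most `k`) if and only
if the shape `λ/d/μ` is toric. -/
theorem toricSchur_ne_zero_iff (k n : ℕ) (hk : 1 ≤ k) (hkn : k < n)
    (lam mu : Fin k → ℕ) (hlam : lam ∈ PknFinset k n) (hmu : mu ∈ PknFinset k n)
    (d : ℕ) :
    (∃ T : ℤ × ℤ → ℕ, IsCylTableau n lam mu d T ∧ ∀ p, T p ≤ k) ↔
      IsToricShape n lam mu (d : ℤ) 0 := by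
  have hup := loopVal_antitone_of_mem_PknFinset hkn.le hlam (d : ℤ)
  have hlo := loopVal_antitone_of_mem_PknFinset hkn.le hmu 0
  constructor
  · rintro ⟨T, hT, hTk⟩
    exact isToricShape_of_loopVal_le hk
      (loopVal_le_of_columnsAtMost hk hkn.le (columnsAtMost_of_isCylTableau hup hlo hT hTk))
  · intro htoric
    exact exists_isCylTableau_of_columnsAtMost hk hkn hup hlo
      (columnsAtMost_of_isToricShape hk hkn htoric)
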